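/- In the two-grid algorithm, the coarse-grid correction e_H^k satisfies, for all v_H ∈ V_H, B(u_h^{k,1}; e_H^k, v_H) ≤ C (‖E_k‖₁ + ‖E_{k+1}‖₁) ‖v_H‖₁, with C independent of h, H and k. -/

import Mathlib

open MeasureTheory
open scoped RealInnerProductSpace ENNReal NNReal

noncomputable section

/-- The plane `ℝ²`. -/
abbrev E2 : Type := EuclideanSpace ℝ (Fin 2)

/-- Sobolev norm `‖v‖_{m,p,Ω}`: the sum of the `L^p(Ω)` norms of the iterated
derivatives of `v` of order `≤ m` (`p = ∞` allowed). -/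
def wNorm (Ω : Set E2) (m : ℕ) (p : ℝ≥0∞) (v : E2 → ℝ) : ℝ :=
  ∑ i ∈ Finset.range (m + 1),
    (eLpNorm (fun x => ‖iteratedFDeriv ℝ i v x‖) p (volume.restrict Ω)).toReal

/-- Membership in `W^{m,p}(Ω)`. -/
def MemW (Ω : Set E2) (m : ℕ) (p : ℝ≥0∞) (v : E2 → ℝ) : Prop :=
  ContDiffOn ℝ m v Ω ∧
  ∀ i ≤ m, eLpNorm (fun x => ‖iteratedFDeriv ℝ i v x‖) p (volume.restrict Ω) < ⊤

/-- Membership in `H¹₀(Ω)`. -/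
def MemH10 (Ω : Set E2) (v : E2 → ℝ) : Prop :=
  DifferentiableOn ℝ v Ω ∧
  (∀ i ≤ 1, eLpNorm (fun x => ‖iteratedFDeriv ℝ i v x‖) 2 (volume.restrict Ω) < ⊤) ∧
  ∀ x ∉ Ω, v x = 0

/-- `a_y(w)(x) = D_y a(x, w(x), ∇w(x))`. -/
def aY (a : E2 → ℝ → E2 → E2) (w : E2 → ℝ) (x : E2) : E2 :=
  deriv (fun y => a x y (gradient w x)) (w x)

/-- `a_z(w)(x) = D_z a(x, w(x), ∇w(x))`. -/
def aZ (a : E2 → ℝ → E2 → E2) (w : E2 → ℝ) (x : E2) : E2 →L[ℝ] E2 :=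
  fderiv ℝ (a x (w x)) (gradient w x)

/-- `f_y(w)(x) = D_y f(x, w(x), ∇w(x))`. -/
def fY (f : E2 → ℝ → E2 → ℝ) (w : E2 → ℝ) (x : E2) : ℝ :=
  deriv (fun y => f x y (gradient w x)) (w x)

/-- `f_z(w)(x) = D_z f(x, w(x), ∇w(x))`. -/
def fZ (f : E2 → ℝ → E2 → ℝ) (w : E2 → ℝ) (x : E2) : E2 →L[ℝ] ℝ :=
  fderiv ℝ (f x (w x)) (gradient w x)

/-- The nonlinear form `A(v, φ) = (a(x,v,∇v), ∇φ) + (f(x,v,∇v), φ)`. -/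
def Aform (Ω : Set E2) (a : E2 → ℝ → E2 → E2) (f : E2 → ℝ → E2 → ℝ)
    (v φ : E2 → ℝ) : ℝ :=
  (∫ x in Ω, ⟪a x (v x) (gradient v x), gradient φ x⟫) +
  ∫ x in Ω, f x (v x) (gradient v x) * φ x

/-- The linearized form
`B(w; v, χ) = (a_y(w)v, ∇χ) + (a_z(w)∇v, ∇χ) + (f_y(w)v, χ) + (f_z(w)∇v, χ)`. -/
def Bform (Ω : Set E2) (a : E2 → ℝ → E2 → E2) (f : E2 → ℝ → E2 → ℝ)
    (w v χ : E2 → ℝ) : ℝ :=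
  (∫ x in Ω, ⟪v x • aY a w x, gradient χ x⟫) +
  (∫ x in Ω, ⟪aZ a w x (gradient v x), gradient χ x⟫) +
  (∫ x in Ω, fY f w x * v x * χ x) +
  ∫ x in Ω, fZ f w x (gradient v x) * χ x

/-- `a` is twice continuously differentiable with bounded first and second
order derivatives. -/
def SmoothBoundedA (a : E2 → ℝ → E2 → E2) : Prop :=
  ContDiff ℝ 2 (fun q : E2 × ℝ × E2 => a q.1 q.2.1 q.2.2) ∧
  ∃ Ct > (0:ℝ), ∀ q : E2 × ℝ × E2, ∀ i : ℕ, 1 ≤ i → i ≤ 2 →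
    ‖iteratedFDeriv ℝ i (fun q : E2 × ℝ × E2 => a q.1 q.2.1 q.2.2) q‖ ≤ Ct

/-- `f` is twice continuously differentiable with bounded first and second
order derivatives. -/
def SmoothBoundedF (f : E2 → ℝ → E2 → ℝ) : Prop :=
  ContDiff ℝ 2 (fun q : E2 × ℝ × E2 => f q.1 q.2.1 q.2.2) ∧
  ∃ Ct > (0:ℝ), ∀ q : E2 × ℝ × E2, ∀ i : ℕ, 1 ≤ i → i ≤ 2 →
    ‖iteratedFDeriv ℝ i (fun q : E2 × ℝ × E2 => f q.1 q.2.1 q.2.2) q‖ ≤ Ct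

/-- A bounded convex (polygonal) domain in the plane. -/
def NiceDomain (Ω : Set E2) : Prop :=
  IsOpen Ω ∧ Convex ℝ Ω ∧ Bornology.IsBounded Ω ∧ Ω.Nonempty

/-- Uniform ellipticity of `a_z(u)`: `ξᵀ a_z(u) ξ ≥ α₀ |ξ|²` on `Ω̄`. -/
def Elliptic (Ω : Set E2) (a : E2 → ℝ → E2 → E2) (u : E2 → ℝ) (α₀ : ℝ) : Prop :=
  ∀ x ∈ closure Ω, ∀ ξ : E2, α₀ * ‖ξ‖ ^ 2 ≤ ⟪ξ, aZ a u x ξ⟫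

/-- The Fréchet derivative `L'(u) : H¹₀ → H⁻¹` is an isomorphism, expressed by
inf-sup conditions for the linearized form `B(u; ·, ·)` on `H¹₀(Ω)`. -/
def FrechetIso (Ω : Set E2) (a : E2 → ℝ → E2 → E2) (f : E2 → ℝ → E2 → ℝ)
    (u : E2 → ℝ) : Prop :=
  ∃ c > (0:ℝ),
    (∀ w, MemH10 Ω w → ∃ v, MemH10 Ω v ∧
      wNorm Ω 1 2 w * wNorm Ω 1 2 v ≤ c * Bform Ω a f u w v) ∧
    (∀ w, MemH10 Ω w → ∃ v, MemH10 Ω v ∧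
      wNorm Ω 1 2 w * wNorm Ω 1 2 v ≤ c * Bform Ω a f u v w)

/-- The assumptions on the isolated exact solution `u` of `A(u, v) = 0`. -/
def ExactSolution (Ω : Set E2) (a : E2 → ℝ → E2 → E2) (f : E2 → ℝ → E2 → ℝ)
    (u : E2 → ℝ) (r : ℕ) (ε α₀ : ℝ) : Prop :=
  MemH10 Ω u ∧ MemW Ω (r + 1) 2 u ∧ MemW Ω 2 (ENNReal.ofReal (2 + ε)) u ∧
  (∀ v, MemH10 Ω v → Aform Ω a f u v = 0) ∧
  Elliptic Ω a u α₀ ∧ FrechetIso Ω a f u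

/-- An abstract conforming finite element subspace of `H¹₀(Ω)`. -/
def FESpace (Ω : Set E2) (V : Submodule ℝ (E2 → ℝ)) : Prop :=
  (∀ v ∈ V, MemH10 Ω v) ∧ FiniteDimensional ℝ V

/-- `uh` is the finite element solution in `V`. -/
def FESolution (Ω : Set E2) (a : E2 → ℝ → E2 → E2) (f : E2 → ℝ → E2 → ℝ)
    (V : Submodule ℝ (E2 → ℝ)) (uh : E2 → ℝ) : Prop :=
  uh ∈ V ∧ ∀ vh ∈ V, Aform Ω a f uh vh = 0

/-- The iterative two-grid algorithm: `uhk 0 = u_H`, and at each step `eHk k ∈ V_H`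
solves the coarse nonlinear problem while `uhk (k+1) ∈ V_h` solves the fine linearized
problem. -/
def TwoGrid (Ω : Set E2) (a : E2 → ℝ → E2 → E2) (f : E2 → ℝ → E2 → ℝ)
    (VH Vh : Submodule ℝ (E2 → ℝ)) (uhk eHk : ℕ → E2 → ℝ) : Prop :=
  FESolution Ω a f VH (uhk 0) ∧
  ∀ k : ℕ,
    (eHk k ∈ VH ∧ ∀ vH ∈ VH, Aform Ω a f (uhk k + eHk k) vH = 0) ∧
    (uhk (k + 1) ∈ Vh ∧ ∀ vh ∈ Vh,
      Bform Ω a f (uhk k + eHk k) (uhk (k + 1)) vh =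
        Bform Ω a f (uhk k + eHk k) (uhk k + eHk k) vh -
          Aform Ω a f (uhk k + eHk k) vh)

/-- The Babuška–Brezzi (inf-sup) conditions for `B(w; ·, ·)` on `V` with constant `C`. -/
def BBcond (Ω : Set E2) (a : E2 → ℝ → E2 → E2) (f : E2 → ℝ → E2 → ℝ)
    (w : E2 → ℝ) (V : Submodule ℝ (E2 → ℝ)) (C : ℝ) : Prop :=
  (∀ wh ∈ V, ∃ vh ∈ V, wNorm Ω 1 2 wh * wNorm Ω 1 2 vh ≤ C * Bform Ω a f w wh vh) ∧
  (∀ wh ∈ V, ∃ vh ∈ V, wNorm Ω 1 2 wh * wNorm Ω 1 2 vh ≤ C * Bform Ω a f w vh wh)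

/-- `∂²a/∂y²` at the point `(x, y, z)`. -/
def aYY (a : E2 → ℝ → E2 → E2) (x : E2) (y : ℝ) (z : E2) : E2 :=
  deriv (fun s => deriv (fun t => a x t z) s) y

/-- `∂²a/∂y∂z` at the point `(x, y, z)`. -/
def aYZ (a : E2 → ℝ → E2 → E2) (x : E2) (y : ℝ) (z : E2) : E2 →L[ℝ] E2 :=
  fderiv ℝ (fun w => deriv (fun t => a x t w) y) z

/-- `∂²a/∂z²` at the point `(x, y, z)`. -/
def aZZ (a : E2 → ℝ → E2 → E2) (x : E2) (y : ℝ) (z : E2) : E2 →L[ℝ] E2 →L[ℝ] E2 :=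
  fderiv ℝ (fun w => fderiv ℝ (a x y) w) z

/-- `∂²f/∂y²` at the point `(x, y, z)`. -/
def fYY (f : E2 → ℝ → E2 → ℝ) (x : E2) (y : ℝ) (z : E2) : ℝ :=
  deriv (fun s => deriv (fun t => f x t z) s) y

/-- `∂²f/∂y∂z` at the point `(x, y, z)`. -/
def fYZ (f : E2 → ℝ → E2 → ℝ) (x : E2) (y : ℝ) (z : E2) : E2 →L[ℝ] ℝ :=
  fderiv ℝ (fun w => deriv (fun t => f x t w) y) z

/-- `∂²f/∂z²` at the point `(x, y, z)`. -/
def fZZ (f : E2 → ℝ → E2 → ℝ) (x : E2) (y : ℝ) (z : E2) : E2 →L[ℝ] E2 →L[ℝ] ℝ :=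
  fderiv ℝ (fun w => fderiv ℝ (f x y) w) z

/-- The second order Taylor remainder
`R(η; v, w, χ)` with `η = v + t (w - v)` inside the integral. -/
def Rform (Ω : Set E2) (a : E2 → ℝ → E2 → E2) (f : E2 → ℝ → E2 → ℝ)
    (v w χ : E2 → ℝ) : ℝ :=
  ∫ t in (0:ℝ)..1, (1 - t) *
    ((∫ x in Ω, ⟪(v x - w x) ^ 2 •
        aYY a x (v x + t * (w x - v x)) (gradient v x + t • (gradient w x - gradient v x)),
        gradient χ x⟫) +
     2 * (∫ x in Ω, ⟪(v x - w x) •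
        aYZ a x (v x + t * (w x - v x)) (gradient v x + t • (gradient w x - gradient v x))
          (gradient v x - gradient w x), gradient χ x⟫) +
     (∫ x in Ω, ⟪aZZ a x (v x + t * (w x - v x))
          (gradient v x + t • (gradient w x - gradient v x))
          (gradient v x - gradient w x) (gradient v x - gradient w x), gradient χ x⟫) +
     (∫ x in Ω, fYY f x (v x + t * (w x - v x))
          (gradient v x + t • (gradient w x - gradient v x)) * (v x - w x) ^ 2 * χ x) +
     2 * (∫ x in Ω, fYZ f x (v x + t * (w x - v x))
          (gradient v x + t • (gradient w x - gradient v x))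
          (gradient v x - gradient w x) * (v x - w x) * χ x) +
     ∫ x in Ω, fZZ f x (v x + t * (w x - v x))
          (gradient v x + t • (gradient w x - gradient v x))
          (gradient v x - gradient w x) (gradient v x - gradient w x) * χ x)

/-- `Pv` is the elliptic projection `P_h v` of `v` into `V`, defined by
`(a_z(u) ∇ P_h v, ∇χ) = (a_z(u) ∇ v, ∇χ)` for all `χ ∈ V`. -/
def IsPh (Ω : Set E2) (a : E2 → ℝ → E2 → E2) (u : E2 → ℝ)
    (V : Submodule ℝ (E2 → ℝ)) (v Pv : E2 → ℝ) : Prop :=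
  Pv ∈ V ∧ ∀ χ ∈ V,
    (∫ x in Ω, ⟪aZ a u x (gradient Pv x), gradient χ x⟫) =
    ∫ x in Ω, ⟪aZ a u x (gradient v x), gradient χ x⟫

/-- `Pw` is the projection `P̂_H w` of `w` into `V`, defined by
`B(u_h; P̂_H w, v_H) = B(u_h; w, v_H)` for all `v_H ∈ V`. -/
def IsPHat (Ω : Set E2) (a : E2 → ℝ → E2 → E2) (f : E2 → ℝ → E2 → ℝ)
    (uh : E2 → ℝ) (V : Submodule ℝ (E2 → ℝ)) (w Pw : E2 → ℝ) : Prop :=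
  Pw ∈ V ∧ ∀ vH ∈ V, Bform Ω a f uh Pw vH = Bform Ω a f uh w vH

/-!
Testing the fine-grid equation of the algorithm with `v_H ∈ V_H ⊆ V_h` and subtracting the
coarse-grid equation `A(u_h^{k,1}, v_H) = 0` gives
`B(u_h^{k,1}; e_H^k, v_H) = B(u_h^{k,1}; E_k, v_H) - B(u_h^{k,1}; E_{k+1}, v_H)`.
Since the first derivatives of `a` and `f` are bounded, the Cauchy–Schwarz inequality bounds
`|B(w; v, χ)|` by `C ‖v‖₁ ‖χ‖₁` with `C` depending only on these bounds, for every `w`.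
-/

def uncurry3 {X Y Z G : Type*} (φ : X → Y → Z → G) : X × Y × Z → G :=
  fun q => φ q.1 q.2.1 q.2.2

section PartialDerivatives

variable {X Z G : Type*} [NormedAddCommGroup X] [NormedSpace ℝ X] [NormedAddCommGroup Z]
  [NormedSpace ℝ Z] [NormedAddCommGroup G] [NormedSpace ℝ G] {φ : X → ℝ → Z → G}

lemma deriv_partial_eq_fderiv_uncurry3 {x : X} {y : ℝ} {z : Z}
    (hφ : DifferentiableAt ℝ (uncurry3 φ) (x, y, z)) :
    deriv (fun t => φ x t z) y = fderiv ℝ (uncurry3 φ) (x, y, z) (0, 1, 0) := by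
  have hline : HasDerivAt (fun t : ℝ => (x, t, z)) (0, 1, 0) y :=
    (hasDerivAt_const y x).prodMk ((hasDerivAt_id y).prodMk (hasDerivAt_const y z))
  exact (hφ.hasFDerivAt.comp_hasDerivAt y hline).deriv

lemma fderiv_partial_eq_fderiv_uncurry3 {x : X} {y : ℝ} {z : Z}
    (hφ : DifferentiableAt ℝ (uncurry3 φ) (x, y, z)) :
    fderiv ℝ (φ x y) z = (fderiv ℝ (uncurry3 φ) (x, y, z)).comp
      ((ContinuousLinearMap.inr ℝ X (ℝ × Z)).comp (ContinuousLinearMap.inr ℝ ℝ Z)) :=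
  (hφ.hasFDerivAt.comp z ((hasFDerivAt_prodMk_right x (y, z)).comp z
    (hasFDerivAt_prodMk_right y z))).fderiv

lemma norm_deriv_partial_le {x : X} {y : ℝ} {z : Z}
    (hφ : DifferentiableAt ℝ (uncurry3 φ) (x, y, z)) :
    ‖deriv (fun t => φ x t z) y‖ ≤ ‖fderiv ℝ (uncurry3 φ) (x, y, z)‖ := by
  rw [deriv_partial_eq_fderiv_uncurry3 hφ]
  simpa [Prod.norm_def] using (fderiv ℝ (uncurry3 φ) (x, y, z)).le_opNorm (0, 1, 0)

lemma norm_fderiv_partial_le {x : X} {y : ℝ} {z : Z}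
    (hφ : DifferentiableAt ℝ (uncurry3 φ) (x, y, z)) :
    ‖fderiv ℝ (φ x y) z‖ ≤ ‖fderiv ℝ (uncurry3 φ) (x, y, z)‖ := by
  rw [fderiv_partial_eq_fderiv_uncurry3 hφ]
  refine (ContinuousLinearMap.opNorm_le_bound _ (norm_nonneg _) fun u => ?_)
  simpa [Prod.norm_def] using (fderiv ℝ (uncurry3 φ) (x, y, z)).le_opNorm (0, 0, u)

end PartialDerivatives

section L2Bounds

variable {α F G : Type*} [MeasurableSpace α] {μ : Measure α} [NormedAddCommGroup F]
  [NormedAddCommGroup G] {f : α → F} {g : α → G} {φ : α → ℝ} {C : ℝ}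

lemma integral_norm_mul_norm_le (hf : MemLp f 2 μ) (hg : MemLp g 2 μ) :
    ∫ x, ‖f x‖ * ‖g x‖ ∂μ ≤ (eLpNorm f 2 μ).toReal * (eLpNorm g 2 μ).toReal :=
  calc ∫ x, ‖f x‖ * ‖g x‖ ∂μ = ⟪hf.norm.toLp _, hg.norm.toLp _⟫ := by
        rw [L2.inner_def]
        refine integral_congr_ae ?_
        filter_upwards [hf.norm.coeFn_toLp, hg.norm.coeFn_toLp] with x hfx hgx
        simp [hfx, hgx, mul_comm]
    _ ≤ ‖hf.norm.toLp _‖ * ‖hg.norm.toLp _‖ := real_inner_le_norm _ _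
    _ = (eLpNorm f 2 μ).toReal * (eLpNorm g 2 μ).toReal := by
        rw [Lp.norm_toLp, Lp.norm_toLp, eLpNorm_norm, eLpNorm_norm]

lemma integrable_of_norm_le_mul_norm (hφ : AEStronglyMeasurable φ μ) (hf : MemLp f 2 μ)
    (hg : MemLp g 2 μ) (hbound : ∀ x, ‖φ x‖ ≤ C * (‖f x‖ * ‖g x‖)) : Integrable φ μ :=
  ((hf.norm.integrable_mul hg.norm).const_mul C).mono' hφ (.of_forall hbound)

lemma norm_integral_le_of_norm_le_mul_norm (hC : 0 ≤ C) (hf : MemLp f 2 μ) (hg : MemLp g 2 μ)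
    (hbound : ∀ x, ‖φ x‖ ≤ C * (‖f x‖ * ‖g x‖)) :
    ‖∫ x, φ x ∂μ‖ ≤ C * ((eLpNorm f 2 μ).toReal * (eLpNorm g 2 μ).toReal) :=
  calc ‖∫ x, φ x ∂μ‖ ≤ ∫ x, C * (‖f x‖ * ‖g x‖) ∂μ :=
        norm_integral_le_of_norm_le ((hf.norm.integrable_mul hg.norm).const_mul C)
          (.of_forall hbound)
    _ = C * ∫ x, ‖f x‖ * ‖g x‖ ∂μ := integral_const_mul _ _
    _ ≤ C * ((eLpNorm f 2 μ).toReal * (eLpNorm g 2 μ).toReal) := by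
        gcongr
        exact integral_norm_mul_norm_le hf hg

end L2Bounds

lemma eLpNorm_norm_iteratedFDeriv_zero {E G : Type*} [NormedAddCommGroup E] [NormedSpace ℝ E]
    [NormedAddCommGroup G] [NormedSpace ℝ G] [MeasurableSpace E] {μ : Measure E} {p : ℝ≥0∞}
    (v : E → G) :
    eLpNorm (fun x => ‖iteratedFDeriv ℝ 0 v x‖) p μ = eLpNorm v p μ := by
  rw [eLpNorm_norm]
  exact eLpNorm_congr_norm_ae (.of_forall fun x => norm_iteratedFDeriv_zero)

section Gradient

variable {F : Type*} [NormedAddCommGroup F] [InnerProductSpace ℝ F] [CompleteSpace F]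

lemma norm_gradient (g : F → ℝ) (x : F) : ‖gradient g x‖ = ‖fderiv ℝ g x‖ :=
  (InnerProductSpace.toDual ℝ F).symm.norm_map _

lemma measurable_gradient [MeasurableSpace F] [BorelSpace F] (g : F → ℝ) :
    Measurable (gradient g) :=
  (InnerProductSpace.toDual ℝ F).symm.continuous.measurable.comp (measurable_fderiv ℝ g)

lemma gradient_sub {g₁ g₂ : F → ℝ} {x : F} (h₁ : DifferentiableAt ℝ g₁ x)
    (h₂ : DifferentiableAt ℝ g₂ x) : gradient (g₁ - g₂) x = gradient g₁ x - gradient g₂ x := by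
  rw [gradient, fderiv_sub h₁ h₂, map_sub, gradient, gradient]

lemma eLpNorm_norm_iteratedFDeriv_one [MeasurableSpace F] {μ : Measure F} {p : ℝ≥0∞} (v : F → ℝ) :
    eLpNorm (fun x => ‖iteratedFDeriv ℝ 1 v x‖) p μ = eLpNorm (gradient v) p μ := by
  rw [eLpNorm_norm]
  exact eLpNorm_congr_norm_ae
    (.of_forall fun x => (norm_iteratedFDeriv_one v).trans (norm_gradient v x).symm)

end Gradient

lemma wNorm_one_two_eq (Ω : Set E2) (v : E2 → ℝ) :
    wNorm Ω 1 2 v = (eLpNorm v 2 (volume.restrict Ω)).toReal +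
      (eLpNorm (gradient v) 2 (volume.restrict Ω)).toReal := by
  simp only [wNorm, Finset.sum_range_succ, Finset.sum_range_zero, zero_add,
    eLpNorm_norm_iteratedFDeriv_zero, eLpNorm_norm_iteratedFDeriv_one]

namespace MemH10

variable {Ω : Set E2} {v : E2 → ℝ}

lemma aestronglyMeasurable (hΩ : MeasurableSet Ω) (hv : MemH10 Ω v) :
    AEStronglyMeasurable v (volume.restrict Ω) :=
  hv.1.continuousOn.aestronglyMeasurable hΩ

lemma memLp (hΩ : MeasurableSet Ω) (hv : MemH10 Ω v) : MemLp v 2 (volume.restrict Ω) := by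
  refine ⟨hv.aestronglyMeasurable hΩ, ?_⟩
  simpa only [eLpNorm_norm_iteratedFDeriv_zero] using hv.2.1 0 zero_le_one

lemma memLp_gradient (hv : MemH10 Ω v) : MemLp (gradient v) 2 (volume.restrict Ω) := by
  refine ⟨(measurable_gradient v).aestronglyMeasurable, ?_⟩
  simpa only [eLpNorm_norm_iteratedFDeriv_one] using hv.2.1 1 le_rfl

end MemH10

section Coefficients

variable {G : Type*} [NormedAddCommGroup G] [NormedSpace ℝ G] {φ : E2 → ℝ → E2 → G}
  {μ : Measure E2} {w : E2 → ℝ}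

lemma aestronglyMeasurable_fderiv_uncurry3_comp (hφ : ContDiff ℝ 1 (uncurry3 φ))
    (hw : AEStronglyMeasurable w μ) :
    AEStronglyMeasurable (fun x => fderiv ℝ (uncurry3 φ) (x, w x, gradient w x)) μ :=
  (hφ.continuous_fderiv one_ne_zero).comp_aestronglyMeasurable
    (aestronglyMeasurable_id.prodMk (hw.prodMk (measurable_gradient w).aestronglyMeasurable))

lemma aestronglyMeasurable_deriv_partial (hφ : ContDiff ℝ 1 (uncurry3 φ))
    (hw : AEStronglyMeasurable w μ) :
    AEStronglyMeasurable (fun x => deriv (fun y => φ x y (gradient w x)) (w x)) μ :=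
  ((aestronglyMeasurable_fderiv_uncurry3_comp hφ hw).apply_continuousLinearMap (0, 1, 0)).congr
    (.of_forall fun _ => (deriv_partial_eq_fderiv_uncurry3 (hφ.differentiable one_ne_zero _)).symm)

lemma aestronglyMeasurable_fderiv_partial (hφ : ContDiff ℝ 1 (uncurry3 φ))
    (hw : AEStronglyMeasurable w μ) :
    AEStronglyMeasurable (fun x => fderiv ℝ (φ x (w x)) (gradient w x)) μ :=
  (((ContinuousLinearMap.compL ℝ E2 (E2 × ℝ × E2) G).flip _).continuous.comp_aestronglyMeasurable
    (aestronglyMeasurable_fderiv_uncurry3_comp hφ hw)).congr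
    (.of_forall fun _ => (fderiv_partial_eq_fderiv_uncurry3 (hφ.differentiable one_ne_zero _)).symm)

end Coefficients

section BformBounds

variable {μ : Measure E2} {a : E2 → ℝ → E2 → E2} {f : E2 → ℝ → E2 → ℝ} {Ca Cf : ℝ}
  {w v χ : E2 → ℝ}

lemma aY_term_bound (ha : ContDiff ℝ 1 (uncurry3 a)) (hCa : ∀ q, ‖fderiv ℝ (uncurry3 a) q‖ ≤ Ca)
    (hw : AEStronglyMeasurable w μ) (hv : MemLp v 2 μ) (hχ : MemLp (gradient χ) 2 μ) :
    Integrable (fun x => ⟪v x • aY a w x, gradient χ x⟫) μ ∧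
      ‖∫ x, ⟪v x • aY a w x, gradient χ x⟫ ∂μ‖ ≤
        Ca * ((eLpNorm v 2 μ).toReal * (eLpNorm (gradient χ) 2 μ).toReal) := by
  have hbound x : ‖⟪v x • aY a w x, gradient χ x⟫‖ ≤ Ca * (‖v x‖ * ‖gradient χ x‖) :=
    calc ‖⟪v x • aY a w x, gradient χ x⟫‖ ≤ ‖v x • aY a w x‖ * ‖gradient χ x‖ :=
          norm_inner_le_norm _ _
      _ = ‖aY a w x‖ * (‖v x‖ * ‖gradient χ x‖) := by rw [norm_smul]; ring
      _ ≤ Ca * (‖v x‖ * ‖gradient χ x‖) := by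
          gcongr
          exact (norm_deriv_partial_le (ha.differentiable one_ne_zero _)).trans (hCa _)
  have hmeas := (hv.1.smul (aestronglyMeasurable_deriv_partial ha hw)).inner hχ.1 (𝕜 := ℝ)
  exact ⟨integrable_of_norm_le_mul_norm hmeas hv hχ hbound,
    norm_integral_le_of_norm_le_mul_norm ((norm_nonneg _).trans (hCa 0)) hv hχ hbound⟩

lemma aZ_term_bound (ha : ContDiff ℝ 1 (uncurry3 a)) (hCa : ∀ q, ‖fderiv ℝ (uncurry3 a) q‖ ≤ Ca)
    (hw : AEStronglyMeasurable w μ) (hv : MemLp (gradient v) 2 μ)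
    (hχ : MemLp (gradient χ) 2 μ) :
    Integrable (fun x => ⟪aZ a w x (gradient v x), gradient χ x⟫) μ ∧
      ‖∫ x, ⟪aZ a w x (gradient v x), gradient χ x⟫ ∂μ‖ ≤
        Ca * ((eLpNorm (gradient v) 2 μ).toReal * (eLpNorm (gradient χ) 2 μ).toReal) := by
  have hbound x :
      ‖⟪aZ a w x (gradient v x), gradient χ x⟫‖ ≤ Ca * (‖gradient v x‖ * ‖gradient χ x‖) :=
    calc ‖⟪aZ a w x (gradient v x), gradient χ x⟫‖
        ≤ ‖aZ a w x (gradient v x)‖ * ‖gradient χ x‖ := norm_inner_le_norm _ _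
      _ ≤ ‖aZ a w x‖ * ‖gradient v x‖ * ‖gradient χ x‖ := by
          gcongr
          exact ContinuousLinearMap.le_opNorm _ _
      _ ≤ Ca * (‖gradient v x‖ * ‖gradient χ x‖) := by
          rw [mul_assoc]
          gcongr
          exact (norm_fderiv_partial_le (ha.differentiable one_ne_zero _)).trans (hCa _)
  have hmeas := (isBoundedBilinearMap_apply.continuous.comp_aestronglyMeasurable
    ((aestronglyMeasurable_fderiv_partial ha hw).prodMk hv.1)).inner hχ.1 (𝕜 := ℝ)
  exact ⟨integrable_of_norm_le_mul_norm hmeas hv hχ hbound,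
    norm_integral_le_of_norm_le_mul_norm ((norm_nonneg _).trans (hCa 0)) hv hχ hbound⟩

lemma fY_term_bound (hf : ContDiff ℝ 1 (uncurry3 f)) (hCf : ∀ q, ‖fderiv ℝ (uncurry3 f) q‖ ≤ Cf)
    (hw : AEStronglyMeasurable w μ) (hv : MemLp v 2 μ) (hχ : MemLp χ 2 μ) :
    Integrable (fun x => fY f w x * v x * χ x) μ ∧
      ‖∫ x, fY f w x * v x * χ x ∂μ‖ ≤
        Cf * ((eLpNorm v 2 μ).toReal * (eLpNorm χ 2 μ).toReal) := by
  have hbound x : ‖fY f w x * v x * χ x‖ ≤ Cf * (‖v x‖ * ‖χ x‖) := by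
    rw [norm_mul, norm_mul, mul_assoc]
    gcongr
    exact (norm_deriv_partial_le (hf.differentiable one_ne_zero _)).trans (hCf _)
  have hmeas := ((aestronglyMeasurable_deriv_partial hf hw).mul hv.1).mul hχ.1
  exact ⟨integrable_of_norm_le_mul_norm hmeas hv hχ hbound,
    norm_integral_le_of_norm_le_mul_norm ((norm_nonneg _).trans (hCf 0)) hv hχ hbound⟩

lemma fZ_term_bound (hf : ContDiff ℝ 1 (uncurry3 f)) (hCf : ∀ q, ‖fderiv ℝ (uncurry3 f) q‖ ≤ Cf)
    (hw : AEStronglyMeasurable w μ) (hv : MemLp (gradient v) 2 μ) (hχ : MemLp χ 2 μ) :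
    Integrable (fun x => fZ f w x (gradient v x) * χ x) μ ∧
      ‖∫ x, fZ f w x (gradient v x) * χ x ∂μ‖ ≤
        Cf * ((eLpNorm (gradient v) 2 μ).toReal * (eLpNorm χ 2 μ).toReal) := by
  have hbound x : ‖fZ f w x (gradient v x) * χ x‖ ≤ Cf * (‖gradient v x‖ * ‖χ x‖) :=
    calc ‖fZ f w x (gradient v x) * χ x‖ ≤ ‖fZ f w x‖ * ‖gradient v x‖ * ‖χ x‖ := by
          rw [norm_mul]; gcongr; exact ContinuousLinearMap.le_opNorm _ _
      _ ≤ Cf * (‖gradient v x‖ * ‖χ x‖) := by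
          rw [mul_assoc]
          gcongr
          exact (norm_fderiv_partial_le (hf.differentiable one_ne_zero _)).trans (hCf _)
  have hmeas := (isBoundedBilinearMap_apply.continuous.comp_aestronglyMeasurable
    ((aestronglyMeasurable_fderiv_partial hf hw).prodMk hv.1)).mul hχ.1
  exact ⟨integrable_of_norm_le_mul_norm hmeas hv hχ hbound,
    norm_integral_le_of_norm_le_mul_norm ((norm_nonneg _).trans (hCf 0)) hv hχ hbound⟩

end BformBounds

section Bform

variable {Ω : Set E2} {a : E2 → ℝ → E2 → E2} {f : E2 → ℝ → E2 → ℝ} {Ca Cf : ℝ}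
  {w v v₁ v₂ χ : E2 → ℝ}

lemma abs_Bform_le (hΩ : MeasurableSet Ω) (ha : ContDiff ℝ 1 (uncurry3 a))
    (hCa : ∀ q, ‖fderiv ℝ (uncurry3 a) q‖ ≤ Ca) (hf : ContDiff ℝ 1 (uncurry3 f))
    (hCf : ∀ q, ‖fderiv ℝ (uncurry3 f) q‖ ≤ Cf) (hw : AEStronglyMeasurable w (volume.restrict Ω))
    (hv : MemH10 Ω v) (hχ : MemH10 Ω χ) :
    |Bform Ω a f w v χ| ≤ (Ca + Cf) * (wNorm Ω 1 2 v * wNorm Ω 1 2 χ) := by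
  have h₁ := (aY_term_bound ha hCa hw (hv.memLp hΩ) hχ.memLp_gradient).2
  have h₂ := (aZ_term_bound ha hCa hw hv.memLp_gradient hχ.memLp_gradient).2
  have h₃ := (fY_term_bound hf hCf hw (hv.memLp hΩ) (hχ.memLp hΩ)).2
  have h₄ := (fZ_term_bound hf hCf hw hv.memLp_gradient (hχ.memLp hΩ)).2
  simp only [Real.norm_eq_abs] at h₁ h₂ h₃ h₄
  have hCa₀ : 0 ≤ Ca := (norm_nonneg _).trans (hCa 0)
  have hCf₀ : 0 ≤ Cf := (norm_nonneg _).trans (hCf 0)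
  rw [wNorm_one_two_eq, wNorm_one_two_eq, Bform]
  set Nv₀ := (eLpNorm v 2 (volume.restrict Ω)).toReal
  set Nv₁ := (eLpNorm (gradient v) 2 (volume.restrict Ω)).toReal
  set Nχ₀ := (eLpNorm χ 2 (volume.restrict Ω)).toReal
  set Nχ₁ := (eLpNorm (gradient χ) 2 (volume.restrict Ω)).toReal
  have : 0 ≤ Ca * ((Nv₀ + Nv₁) * Nχ₀) + Cf * ((Nv₀ + Nv₁) * Nχ₁) := by positivity
  rw [abs_le]
  constructor <;> linarith [abs_le.1 h₁, abs_le.1 h₂, abs_le.1 h₃, abs_le.1 h₄]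

lemma Bform_sub (hΩ : IsOpen Ω) (ha : ContDiff ℝ 1 (uncurry3 a))
    (hCa : ∀ q, ‖fderiv ℝ (uncurry3 a) q‖ ≤ Ca) (hf : ContDiff ℝ 1 (uncurry3 f))
    (hCf : ∀ q, ‖fderiv ℝ (uncurry3 f) q‖ ≤ Cf) (hw : AEStronglyMeasurable w (volume.restrict Ω))
    (hv₁ : MemH10 Ω v₁) (hv₂ : MemH10 Ω v₂) (hχ : MemH10 Ω χ) :
    Bform Ω a f w (v₁ - v₂) χ = Bform Ω a f w v₁ χ - Bform Ω a f w v₂ χ := by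
  have hΩm := hΩ.measurableSet
  have hgrad : Set.EqOn (gradient (v₁ - v₂)) (gradient v₁ - gradient v₂) Ω := fun x hx =>
    gradient_sub (hv₁.1.differentiableAt (hΩ.mem_nhds hx))
      (hv₂.1.differentiableAt (hΩ.mem_nhds hx))
  have e₂ : ∫ x in Ω, ⟪aZ a w x (gradient (v₁ - v₂) x), gradient χ x⟫ =
      ∫ x in Ω, (⟪aZ a w x (gradient v₁ x), gradient χ x⟫ -
        ⟪aZ a w x (gradient v₂ x), gradient χ x⟫) :=
    setIntegral_congr_fun hΩm fun x hx => by
      rw [hgrad hx, Pi.sub_apply, map_sub, inner_sub_left]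
  have e₄ : ∫ x in Ω, fZ f w x (gradient (v₁ - v₂) x) * χ x =
      ∫ x in Ω, (fZ f w x (gradient v₁ x) * χ x - fZ f w x (gradient v₂ x) * χ x) :=
    setIntegral_congr_fun hΩm fun x hx => by
      rw [hgrad hx, Pi.sub_apply, map_sub, sub_mul]
  simp only [Bform, e₂, e₄, Pi.sub_apply, sub_smul, inner_sub_left, mul_sub, sub_mul]
  rw [integral_sub (aY_term_bound ha hCa hw (hv₁.memLp hΩm) hχ.memLp_gradient).1
      (aY_term_bound ha hCa hw (hv₂.memLp hΩm) hχ.memLp_gradient).1,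
    integral_sub (aZ_term_bound ha hCa hw hv₁.memLp_gradient hχ.memLp_gradient).1
      (aZ_term_bound ha hCa hw hv₂.memLp_gradient hχ.memLp_gradient).1,
    integral_sub (fY_term_bound hf hCf hw (hv₁.memLp hΩm) (hχ.memLp hΩm)).1
      (fY_term_bound hf hCf hw (hv₂.memLp hΩm) (hχ.memLp hΩm)).1,
    integral_sub (fZ_term_bound hf hCf hw hv₁.memLp_gradient (hχ.memLp hΩm)).1
      (fZ_term_bound hf hCf hw hv₂.memLp_gradient (hχ.memLp hΩm)).1]
  ring

end Bform

lemma contDiff_one_and_norm_fderiv_le {E F : Type*} [NormedAddCommGroup E] [NormedSpace ℝ E]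
    [NormedAddCommGroup F] [NormedSpace ℝ F] {g : E → F} {C : ℝ} (hg : ContDiff ℝ 2 g)
    (hC : ∀ q, ∀ i : ℕ, 1 ≤ i → i ≤ 2 → ‖iteratedFDeriv ℝ i g q‖ ≤ C) :
    ContDiff ℝ 1 g ∧ ∀ q, ‖fderiv ℝ g q‖ ≤ C :=
  ⟨hg.of_le one_le_two, fun q => by
    simpa only [norm_iteratedFDeriv_one] using hC q 1 le_rfl one_le_two⟩

section TwoGrid

variable {Ω : Set E2} {a : E2 → ℝ → E2 → E2} {f : E2 → ℝ → E2 → ℝ}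
  {VH Vh : Submodule ℝ (E2 → ℝ)} {uhk eHk : ℕ → E2 → ℝ}

lemma TwoGrid.iterate_mem (hle : VH ≤ Vh) (hTG : TwoGrid Ω a f VH Vh uhk eHk) :
    ∀ k, uhk k ∈ Vh
  | 0 => hle hTG.1.1
  | k + 1 => (hTG.2 k).2.1

lemma TwoGrid.intermediate_mem (hle : VH ≤ Vh) (hTG : TwoGrid Ω a f VH Vh uhk eHk) (k : ℕ) :
    uhk k + eHk k ∈ Vh :=
  Vh.add_mem (hTG.iterate_mem hle k) (hle (hTG.2 k).1.1)

lemma TwoGrid.Bform_correction_eq {Ca Cf : ℝ} {uh vH : E2 → ℝ}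
    (hΩ : IsOpen Ω) (ha : ContDiff ℝ 1 (uncurry3 a)) (hCa : ∀ q, ‖fderiv ℝ (uncurry3 a) q‖ ≤ Ca)
    (hf : ContDiff ℝ 1 (uncurry3 f)) (hCf : ∀ q, ‖fderiv ℝ (uncurry3 f) q‖ ≤ Cf)
    (hle : VH ≤ Vh) (hVh : ∀ v ∈ Vh, MemH10 Ω v) (huh : uh ∈ Vh)
    (hTG : TwoGrid Ω a f VH Vh uhk eHk) (k : ℕ) (hvH : vH ∈ VH) :
    Bform Ω a f (uhk k + eHk k) (eHk k) vH =
      Bform Ω a f (uhk k + eHk k) (uh - uhk k) vH -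
        Bform Ω a f (uhk k + eHk k) (uh - uhk (k + 1)) vH := by
  obtain ⟨⟨-, hcoarse⟩, -, hfine⟩ := hTG.2 k
  have hw := hTG.intermediate_mem hle k
  have hwm := (hVh _ hw).aestronglyMeasurable hΩ.measurableSet
  have hsub {v₁ v₂} (h₁ : v₁ ∈ Vh) (h₂ : v₂ ∈ Vh) :=
    Bform_sub hΩ ha hCa hf hCf hwm (hVh v₁ h₁) (hVh v₂ h₂) (hVh vH (hle hvH))
  calc Bform Ω a f (uhk k + eHk k) (eHk k) vH
      = Bform Ω a f (uhk k + eHk k) (uhk k + eHk k - uhk k) vH := by rw [add_sub_cancel_left]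
    _ = _ := by
      rw [hsub hw (hTG.iterate_mem hle k), hsub huh (hTG.iterate_mem hle k),
        hsub huh (hTG.iterate_mem hle (k + 1)), hfine vH (hle hvH), hcoarse vH hvH]
      ring

end TwoGrid

theorem two_grid_stmt_11_general
    (Ω : Set E2) (a : E2 → ℝ → E2 → E2) (f : E2 → ℝ → E2 → ℝ)
    (hΩ : NiceDomain Ω) (ha : SmoothBoundedA a) (hf : SmoothBoundedF f) :
    ∃ C > (0:ℝ), ∀ (H h : ℝ) (VH Vh : Submodule ℝ (E2 → ℝ))
      (uh : E2 → ℝ) (uhk eHk : ℕ → E2 → ℝ),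
      0 < h → h < H → H < 1 → VH ≤ Vh → FESpace Ω VH → FESpace Ω Vh →
      FESolution Ω a f Vh uh → TwoGrid Ω a f VH Vh uhk eHk →
      ∀ k : ℕ, ∀ vH ∈ VH,
        Bform Ω a f (uhk k + eHk k) (eHk k) vH ≤
          C * ((wNorm Ω 1 2 (uh - uhk k) + wNorm Ω 1 2 (uh - uhk (k + 1))) *
            wNorm Ω 1 2 vH) := by
  obtain ⟨ha₂, Ca, hCa₀, hCa₂⟩ := ha
  obtain ⟨hf₂, Cf, hCf₀, hCf₂⟩ := hf
  obtain ⟨ha₁, hCa⟩ := contDiff_one_and_norm_fderiv_le ha₂ hCa₂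
  obtain ⟨hf₁, hCf⟩ := contDiff_one_and_norm_fderiv_le hf₂ hCf₂
  refine ⟨Ca + Cf, by positivity, fun H h VH Vh uh uhk eHk _ _ _ hle _ hVh huh hTG k vH hvH => ?_⟩
  rw [hTG.Bform_correction_eq hΩ.1 ha₁ hCa hf₁ hCf hle hVh.1 huh.1 k hvH]
  have hmem := hVh.1
  have hwm := (hmem _ (hTG.intermediate_mem hle k)).aestronglyMeasurable hΩ.1.measurableSet
  have hB j := abs_Bform_le hΩ.1.measurableSet ha₁ hCa hf₁ hCf hwm
    (hmem _ (Vh.sub_mem huh.1 (hTG.iterate_mem hle j))) (hmem _ (hle hvH))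
  linarith [le_abs_self (Bform Ω a f (uhk k + eHk k) (uh - uhk k) vH),
    neg_abs_le (Bform Ω a f (uhk k + eHk k) (uh - uhk (k + 1)) vH), hB k, hB (k + 1)]

/-- Lemma 4.5: the coarse-grid correction satisfies
`B(u_h^{k,1}; e_H^k, v_H) ≤ C (‖E_k‖₁ + ‖E_{k+1}‖₁) ‖v_H‖₁` for all `v_H ∈ V_H`,
with `C` independent of `h`, `H` and `k`. -/
theorem two_grid_stmt_11
    (Ω : Set E2) (a : E2 → ℝ → E2 → E2) (f : E2 → ℝ → E2 → ℝ)
    (r : ℕ) (hΩ : NiceDomain Ω) (ha : SmoothBoundedA a) (hf : SmoothBoundedF f)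
    (hr : 1 ≤ r) :
    ∃ C > (0:ℝ), ∀ (H h : ℝ) (VH Vh : Submodule ℝ (E2 → ℝ))
      (uh : E2 → ℝ) (uhk eHk : ℕ → E2 → ℝ),
      0 < h → h < H → H < 1 → VH ≤ Vh → FESpace Ω VH → FESpace Ω Vh →
      FESolution Ω a f Vh uh → TwoGrid Ω a f VH Vh uhk eHk →
      ∀ k : ℕ, ∀ vH ∈ VH,
        Bform Ω a f (uhk k + eHk k) (eHk k) vH ≤
          C * ((wNorm Ω 1 2 (uh - uhk k) + wNorm Ω 1 2 (uh - uhk (k + 1))) *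
            wNorm Ω 1 2 vH) :=
  two_grid_stmt_11_general Ω a f hΩ ha hf
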